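/- Let X₁, X₂ be independent random vectors in ℝ^d and let X₁′ = ‖X₁‖U₁ and X₂′ = ‖X₂‖U₂ be their spherically symmetric variants, with U₁, U₂ i.i.d. uniform on S^{d-1} independent of X₁, X₂. Then the inner product ⟨X₁, X₂′⟩ has the same distribution as ⟨X₁′, X₂′⟩. -/

import Mathlib

open MeasureTheory ProbabilityTheory Filter
open scoped RealInnerProductSpace ENNReal NNReal Topology ProbabilityTheory

noncomputable section

/-- A distribution on `ℝ^d` is spherically symmetric if it is invariant under every
orthogonal transformation (equivalently, every linear isometry equivalence of `ℝ^d`). -/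
def SphericallySymmetric {d : ℕ} (μ : Measure (EuclideanSpace ℝ (Fin d))) : Prop :=
  ∀ H : EuclideanSpace ℝ (Fin d) ≃ₗᵢ[ℝ] EuclideanSpace ℝ (Fin d), μ.map H = μ

/-- `μ` is the uniform distribution on the unit sphere `S^{d-1}`: a rotation-invariant
probability measure concentrated on the unit sphere. -/
def UnifSphere {d : ℕ} (μ : Measure (EuclideanSpace ℝ (Fin d))) : Prop :=
  IsProbabilityMeasure μ ∧ (∀ᵐ x ∂μ, ‖x‖ = 1) ∧ SphericallySymmetric μ

/-!
Conditionally on `(X₁, X₂) = (x₁, x₂)`, the left side is `⟪‖x₂‖ • x₁, U₂⟫`, and conditionally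
further on `U₁ = u₁` the right side is `⟪(‖x₁‖ * ‖x₂‖) • u₁, U₂⟫`. Since `‖u₁‖ = 1`, the two
vectors paired with `U₂` have the same norm, and by rotation invariance the law of `⟪a, U₂⟫`
depends on `a` only through `‖a‖`.
-/

namespace MeasureTheory.Measure

variable {α β γ δ : Type*} [MeasurableSpace α] [MeasurableSpace β] [MeasurableSpace γ]
  [MeasurableSpace δ]

theorem map_prod_eq_of_ae_map_eq {μ : Measure α} {ν : Measure β} {ν' : Measure γ}
    [SFinite ν] [SFinite ν'] {f : α × β → δ} {g : α × γ → δ}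
    (hf : Measurable f) (hg : Measurable g)
    (h : ∀ᵐ x ∂μ, ν.map (fun y => f (x, y)) = ν'.map (fun z => g (x, z))) :
    (μ.prod ν).map f = (μ.prod ν').map g := by
  ext s hs
  rw [map_apply hf hs, map_apply hg hs, prod_apply (hf hs), prod_apply (hg hs)]
  refine lintegral_congr_ae (h.mono fun x hx => ?_)
  have hxs := congrArg (· s) hx
  rwa [map_apply (by fun_prop) hs, map_apply (by fun_prop) hs] at hxs

end MeasureTheory.Measure

section Sphere

variable {d : ℕ}

local notation "E" => EuclideanSpace ℝ (Fin d)

theorem SphericallySymmetric.map_inner_eq {ν : Measure E} (hν : SphericallySymmetric ν)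
    {a b : E} (hab : ‖a‖ = ‖b‖) :
    ν.map (fun u => ⟪a, u⟫) = ν.map (fun u => ⟪b, u⟫) := by
  -- the reflection `R` swapping `a` and `b` satisfies `⟪b, R u⟫ = ⟪R a, R u⟫ = ⟪a, u⟫`
  set R := Submodule.reflection (ℝ ∙ (a - b))ᗮ
  have hR : (fun u => ⟪b, u⟫) ∘ R = fun u => ⟪a, u⟫ := by
    ext u
    rw [Function.comp_apply, ← Submodule.reflection_sub hab, LinearIsometryEquiv.inner_map_map]
  rw [← hR, ← Measure.map_map (by fun_prop) R.continuous.measurable, hν R]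

theorem map_mul_inner_prod_eq_map_inner {ν₁ ν₂ : Measure E} [IsProbabilityMeasure ν₁]
    [SFinite ν₂] (h₁ : ∀ᵐ u ∂ν₁, ‖u‖ = 1) (h₂ : SphericallySymmetric ν₂) {a : E} {c : ℝ}
    (hac : ‖a‖ = |c|) :
    (ν₁.prod ν₂).map (fun q => c * ⟪q.1, q.2⟫) = ν₂.map (fun u => ⟪a, u⟫) := by
  calc (ν₁.prod ν₂).map (fun q => c * ⟪q.1, q.2⟫)
      = (ν₁.prod ν₂).map ((fun u => ⟪a, u⟫) ∘ Prod.snd) := by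
        refine Measure.map_prod_eq_of_ae_map_eq (by fun_prop) (by fun_prop)
          (h₁.mono fun u hu => ?_)
        simp_rw [← real_inner_smul_left]
        exact h₂.map_inner_eq (by rw [norm_smul, hu, mul_one, Real.norm_eq_abs, hac])
    _ = ν₂.map (fun u => ⟪a, u⟫) := by
        rw [← Measure.map_map (by fun_prop) measurable_snd, Measure.map_snd_prod, measure_univ,
          one_smul]

theorem map_inner_norm_smul_eq {μ : Measure (E × E)} {ν₁ ν₂ : Measure E}
    [IsProbabilityMeasure ν₁] [SFinite ν₂] (h₁ : ∀ᵐ u ∂ν₁, ‖u‖ = 1)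
    (h₂ : SphericallySymmetric ν₂) :
    (μ.prod ν₂).map (fun p => ⟪p.1.1, ‖p.1.2‖ • p.2⟫) =
      (μ.prod (ν₁.prod ν₂)).map (fun p => ⟪‖p.1.1‖ • p.2.1, ‖p.1.2‖ • p.2.2⟫) := by
  refine Measure.map_prod_eq_of_ae_map_eq (by fun_prop) (by fun_prop) (ae_of_all _ fun x => ?_)
  have hL : (fun u => ⟪x.1, ‖x.2‖ • u⟫) = fun u => ⟪‖x.2‖ • x.1, u⟫ := by
    ext u
    rw [real_inner_smul_left, real_inner_smul_right]
  have hR : (fun q : E × E => ⟪‖x.1‖ • q.1, ‖x.2‖ • q.2⟫) =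
      fun q => (‖x.1‖ * ‖x.2‖) * ⟪q.1, q.2⟫ := by
    ext q
    rw [real_inner_smul_left, real_inner_smul_right, mul_assoc]
  rw [hL, hR, map_mul_inner_prod_eq_map_inner h₁ h₂]
  rw [norm_smul, norm_norm, abs_of_nonneg (by positivity), mul_comm]

theorem identDistrib_inner_norm_smul {Ω : Type*} [MeasurableSpace Ω] {P : Measure Ω}
    [IsProbabilityMeasure P] {X₁ X₂ U₁ U₂ : Ω → E} (hX₁ : Measurable X₁) (hX₂ : Measurable X₂)
    (hU₁ : Measurable U₁) (hU₂ : Measurable U₂)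
    (hXU : IndepFun (fun ω => (X₁ ω, X₂ ω)) (fun ω => (U₁ ω, U₂ ω)) P)
    (hU₁₂ : IndepFun U₁ U₂ P) (hU₁_norm : ∀ᵐ u ∂P.map U₁, ‖u‖ = 1)
    (hU₂_symm : SphericallySymmetric (P.map U₂)) :
    IdentDistrib (fun ω => ⟪X₁ ω, ‖X₂ ω‖ • U₂ ω⟫)
      (fun ω => ⟪‖X₁ ω‖ • U₁ ω, ‖X₂ ω‖ • U₂ ω⟫) P P := by
  have hX : Measurable fun ω => (X₁ ω, X₂ ω) := hX₁.prodMk hX₂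
  have hU : Measurable fun ω => (U₁ ω, U₂ ω) := hU₁.prodMk hU₂
  have : IsProbabilityMeasure (P.map U₁) := Measure.isProbabilityMeasure_map hU₁.aemeasurable
  set μ := P.map fun ω => (X₁ ω, X₂ ω)
  have hlaw₁ : IdentDistrib (fun ω => ((X₁ ω, X₂ ω), U₂ ω)) id P (μ.prod (P.map U₂)) := by
    refine ⟨(hX.prodMk hU₂).aemeasurable, aemeasurable_id, ?_⟩
    rw [Measure.map_id, ← indepFun_iff_map_prod_eq_prod_map_map hX.aemeasurable hU₂.aemeasurable]
    exact hXU.comp measurable_id measurable_snd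
  have hlaw₂ : IdentDistrib (fun ω => ((X₁ ω, X₂ ω), (U₁ ω, U₂ ω))) id P
      (μ.prod ((P.map U₁).prod (P.map U₂))) := by
    refine ⟨(hX.prodMk hU).aemeasurable, aemeasurable_id, ?_⟩
    rw [Measure.map_id, ← (indepFun_iff_map_prod_eq_prod_map_map hU₁.aemeasurable
      hU₂.aemeasurable).1 hU₁₂, ← indepFun_iff_map_prod_eq_prod_map_map hX.aemeasurable
      hU.aemeasurable]
    exact hXU
  have hprod := map_inner_norm_smul_eq (μ := μ) hU₁_norm hU₂_symm
  exact (hlaw₁.comp (u := fun p : (E × E) × E => ⟪p.1.1, ‖p.1.2‖ • p.2⟫) (by fun_prop)).trans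
    ((IdentDistrib.mk (by fun_prop) (by fun_prop) hprod).trans
      (hlaw₂.comp (u := fun p : (E × E) × E × E => ⟪‖p.1.1‖ • p.2.1, ‖p.1.2‖ • p.2.2⟫)
        (by fun_prop)).symm)

end Sphere

theorem inner_variant_identDistrib_general
    {Ω : Type*} [MeasureSpace Ω] [IsProbabilityMeasure (ℙ : Measure Ω)]
    {d : ℕ}
    (X1 X2 U1 U2 : Ω → EuclideanSpace ℝ (Fin d))
    (hX1 : Measurable X1) (hX2 : Measurable X2)
    (hU1 : Measurable U1) (hU2 : Measurable U2)
    (hindep : iIndepFun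
      ![X1, X2, U1, U2] ℙ)
    (hU1dist : UnifSphere (Measure.map U1 ℙ))
    (hU2dist : UnifSphere (Measure.map U2 ℙ)) :
    IdentDistrib (fun ω => ⟪X1 ω, ‖X2 ω‖ • U2 ω⟫)
      (fun ω => ⟪‖X1 ω‖ • U1 ω, ‖X2 ω‖ • U2 ω⟫) ℙ ℙ := by
  have hmeas : ∀ i, Measurable (![X1, X2, U1, U2] i) := by
    intro i
    fin_cases i <;> assumption
  exact identDistrib_inner_norm_smul hX1 hX2 hU1 hU2
    (hindep.indepFun_prodMk_prodMk hmeas 0 1 2 3 (by decide) (by decide) (by decide) (by decide))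
    (hindep.indepFun (show (2 : Fin 4) ≠ 3 by decide)) hU1dist.2.1 hU2dist.2.2

/-- Lemma B.1: `⟨X₁, X₂'⟩ =ᵈ ⟨X₁', X₂'⟩` for independent `X₁, X₂` and
their spherically symmetric variants. -/
theorem inner_variant_identDistrib
    {Ω : Type*} [MeasureSpace Ω] [IsProbabilityMeasure (ℙ : Measure Ω)]
    {d : ℕ}
    (X1 X2 U1 U2 : Ω → EuclideanSpace ℝ (Fin d))
    (hX1 : Measurable X1) (hX2 : Measurable X2)
    (hU1 : Measurable U1) (hU2 : Measurable U2)
    (hindep : iIndepFun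
      ![X1, X2, U1, U2] ℙ)
    (hU1dist : UnifSphere (Measure.map U1 ℙ))
    (hU2dist : UnifSphere (Measure.map U2 ℙ))
    (hUiid : IdentDistrib U1 U2 ℙ ℙ) :
    IdentDistrib (fun ω => ⟪X1 ω, ‖X2 ω‖ • U2 ω⟫)
      (fun ω => ⟪‖X1 ω‖ • U1 ω, ‖X2 ω‖ • U2 ω⟫) ℙ ℙ :=
  inner_variant_identDistrib_general X1 X2 U1 U2 hX1 hX2 hU1 hU2 hindep hU1dist hU2dist
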